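/- arXiv:1412.5030 — 2 statements merged into one kernel-verified Lean document; each statement's English description precedes it below -/
import Mathlib

section
/- Let (x_n) be a sequence in a Banach space X such that ∑ r_n x_n converges in L¹([0,1]; X). If there exist σ₀ > 0 and c > 0 such that ∑_{n=1}^N ‖x_n‖ ≤ c N^{σ₀} ∫₀¹ ‖∑_{n=1}^N r_n(t) x_n‖ dt for every N, then for every σ > σ₀ the series ∑_n ‖x_n‖ / n^σ converges, with bound ∑_n ‖x_n‖/n^σ ≤ c K (1 + ∑_{n=1}^∞ σ n^{-(σ-σ₀+1)}) where K = ∫₀¹ ‖∑_n r_n(t) x_n‖ dt. -/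
open MeasureTheory Filter Finset

/-- The `n`-th Rademacher function on `[0,1]`. -/
noncomputable def rad (n : ℕ) (t : ℝ) : ℝ :=
  if Int.fract ((2 ^ n : ℝ) * t) < 1 / 2 then 1 else -1

/-- Partial sums of the Rademacher series `∑ rₙ(t) xₙ`. -/
noncomputable def radPartial {X : Type*} [NormedAddCommGroup X] [NormedSpace ℝ X]
    (x : ℕ → X) (N : ℕ) (t : ℝ) : X :=
  ∑ n ∈ Finset.range N, rad n t • x n

/-- `f` is the limit of the Rademacher series `∑ rₙ xₙ` in `L¹([0,1];X)`. -/
def IsRadLimit {X : Type*} [NormedAddCommGroup X] [NormedSpace ℝ X]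
    (x : ℕ → X) (f : ℝ → X) : Prop :=
  (∀ N, IntervalIntegrable (fun t => ‖radPartial x N t - f t‖) volume 0 1) ∧
    Tendsto (fun N => ∫ t in (0:ℝ)..1, ‖radPartial x N t - f t‖) atTop (nhds 0)

/-!
Conditioning on the first sign gives `∫₀¹ ‖v + ∑_{n≤N} rₙ yₙ‖ = ½ ∫₀¹ ‖v + y₀ + ∑_{n<N} rₙ yₙ₊₁‖
+ ½ ∫₀¹ ‖v - y₀ + ∑_{n<N} rₙ yₙ₊₁‖`, so by induction from `‖v‖ ≤ ½ ‖v + w‖ + ½ ‖v - w‖` the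
integrals `I_N = ∫₀¹ ‖∑_{n<N} rₙ xₙ‖` increase with `N`. They converge to `K = ∫₀¹ ‖f‖`, hence
`I_N ≤ K` and `∑_{n<N} ‖xₙ‖ ≤ c K N^{σ₀}`. Abel summation against the weights `(n+1)^{-σ}`, whose
consecutive differences are at most `σ (n+1)^{-σ-1}` by the mean value theorem, turns this growth
bound into the bound on `∑ ‖xₙ‖ / (n+1)^σ`.
-/

open scoped Topology

lemma measurable_rad (n : ℕ) : Measurable (rad n) :=
  Measurable.ite
    (measurableSet_lt (measurable_fract.comp (measurable_const_mul _)) measurable_const)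
    measurable_const measurable_const

lemma abs_rad (n : ℕ) (t : ℝ) : |rad n t| = 1 := by
  unfold rad; split_ifs <;> norm_num

lemma rad_succ (n : ℕ) (t : ℝ) : rad (n + 1) t = rad n (2 * t) := by
  simp only [rad, pow_succ, mul_assoc]

lemma rad_periodic (n : ℕ) : Function.Periodic (rad n) 1 := fun t => by
  have h : (2 : ℝ) ^ n * (t + 1) = 2 ^ n * t + ((2 ^ n : ℕ) : ℝ) := by push_cast; ring
  simp only [rad, h, Int.fract_add_natCast]

lemma rad_zero_of_mem_Ioo {t : ℝ} (ht : t ∈ Set.Ioo 0 (1 / 2)) : rad 0 t = 1 := by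
  rw [rad, pow_zero, one_mul, Int.fract_eq_self.2 ⟨ht.1.le, by linarith [ht.2]⟩, if_pos ht.2]

lemma rad_zero_of_mem_Ioo_half_one {t : ℝ} (ht : t ∈ Set.Ioo (1 / 2) 1) : rad 0 t = -1 := by
  rw [rad, pow_zero, one_mul, Int.fract_eq_self.2 ⟨by linarith [ht.1], ht.2⟩,
    if_neg (not_lt.2 ht.1.le)]

section radPartial

variable {X : Type*} [NormedAddCommGroup X] [NormedSpace ℝ X]

lemma radPartial_zero (y : ℕ → X) : radPartial y 0 = 0 := by
  ext t; simp [radPartial]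

lemma radPartial_succ (y : ℕ → X) (N : ℕ) (t : ℝ) :
    radPartial y (N + 1) t = rad 0 t • y 0 + radPartial (fun n => y (n + 1)) N (2 * t) := by
  simp only [radPartial, sum_range_succ', rad_succ, add_comm]

lemma radPartial_periodic (y : ℕ → X) (N : ℕ) : Function.Periodic (radPartial y N) 1 :=
  fun t => by simp only [radPartial, rad_periodic _ t]

lemma norm_radPartial_le (y : ℕ → X) (N : ℕ) (t : ℝ) :
    ‖radPartial y N t‖ ≤ ∑ n ∈ range N, ‖y n‖ :=
  (norm_sum_le _ _).trans_eq <| sum_congr rfl fun n _ => by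
    rw [norm_smul, Real.norm_eq_abs, abs_rad, one_mul]

lemma stronglyMeasurable_radPartial (y : ℕ → X) (N : ℕ) : StronglyMeasurable (radPartial y N) :=
  Finset.stronglyMeasurable_fun_sum _ fun n _ => (measurable_rad n).stronglyMeasurable.smul_const _

lemma intervalIntegrable_norm_add_radPartial (v : X) (y : ℕ → X) (N : ℕ) (a b : ℝ) :
    IntervalIntegrable (fun t => ‖v + radPartial y N t‖) volume a b :=
  (intervalIntegrable_const (c := ‖v‖ + ∑ n ∈ range N, ‖y n‖)).mono_fun'
    (stronglyMeasurable_const.add (stronglyMeasurable_radPartial y N)).norm.aestronglyMeasurable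
    (ae_of_all _ fun t => by
      simp only [norm_norm]
      exact (norm_add_le _ _).trans (add_le_add_right (norm_radPartial_le y N t) _))

/-- On `(0, 1/2)` the first sign is `+1`, on `(1/2, 1)` it is `-1`, and on each half the remaining
signs run through a full period at double speed. -/
lemma integral_norm_add_radPartial_succ (v : X) (y : ℕ → X) (N : ℕ) :
    ∫ t in (0 : ℝ)..1, ‖v + radPartial y (N + 1) t‖ =
      (∫ t in (0 : ℝ)..1, ‖v + y 0 + radPartial (fun n => y (n + 1)) N t‖) / 2 +
      (∫ t in (0 : ℝ)..1, ‖v - y 0 + radPartial (fun n => y (n + 1)) N t‖) / 2 := by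
  set g : X → ℝ → ℝ := fun w t => ‖w + radPartial (fun n => y (n + 1)) N t‖
  have hg : ∀ w, Function.Periodic (g w) 1 := fun w t => by
    simp only [g, radPartial_periodic _ N t]
  have h₁ : ∫ t in (0 : ℝ)..1 / 2, ‖v + radPartial y (N + 1) t‖ =
      (∫ t in (0 : ℝ)..1, g (v + y 0) t) / 2 := by
    calc ∫ t in (0 : ℝ)..1 / 2, ‖v + radPartial y (N + 1) t‖
        = ∫ t in (0 : ℝ)..1 / 2, g (v + y 0) (2 * t) :=
          intervalIntegral.integral_congr_Ioo_of_le (by norm_num) fun t ht => by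
            simp only [g, radPartial_succ, rad_zero_of_mem_Ioo ht, one_smul, add_assoc]
      _ = _ := by norm_num [intervalIntegral.integral_comp_mul_left, div_eq_inv_mul]
  have h₂ : ∫ t in (1 / 2 : ℝ)..1, ‖v + radPartial y (N + 1) t‖ =
      (∫ t in (0 : ℝ)..1, g (v - y 0) t) / 2 := by
    calc ∫ t in (1 / 2 : ℝ)..1, ‖v + radPartial y (N + 1) t‖
        = ∫ t in (1 / 2 : ℝ)..1, g (v - y 0) (2 * t) :=
          intervalIntegral.integral_congr_Ioo_of_le (by norm_num) fun t ht => by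
            simp only [g, radPartial_succ, rad_zero_of_mem_Ioo_half_one ht, neg_one_smul,
              sub_eq_add_neg, add_assoc]
      _ = (∫ t in (1 : ℝ)..1 + 1, g (v - y 0) t) / 2 := by
          norm_num [intervalIntegral.integral_comp_mul_left, div_eq_inv_mul]
      _ = _ := by rw [(hg _).intervalIntegral_add_eq 1 0, zero_add]
  rw [← intervalIntegral.integral_add_adjacent_intervals (b := 1 / 2)
    (intervalIntegrable_norm_add_radPartial _ _ _ _ _)
    (intervalIntegrable_norm_add_radPartial _ _ _ _ _), h₁, h₂]

lemma integral_norm_add_radPartial_le_succ (N : ℕ) :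
    ∀ (v : X) (y : ℕ → X), ∫ t in (0 : ℝ)..1, ‖v + radPartial y N t‖ ≤
      ∫ t in (0 : ℝ)..1, ‖v + radPartial y (N + 1) t‖ := by
  induction N with
  | zero =>
    intro v y
    have h : ‖(2 : ℝ) • v‖ ≤ ‖v + y 0‖ + ‖v - y 0‖ := by
      have h2v : v + y 0 + (v - y 0) = (2 : ℝ) • v := by rw [two_smul]; abel
      exact h2v ▸ norm_add_le _ _
    rw [norm_smul, Real.norm_two] at h
    simp only [integral_norm_add_radPartial_succ, radPartial_zero, Pi.zero_apply, add_zero,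
      intervalIntegral.integral_const, sub_zero, one_smul]
    linarith
  | succ N ih =>
    intro v y
    rw [integral_norm_add_radPartial_succ v y N, integral_norm_add_radPartial_succ v y (N + 1)]
    linarith [ih (v + y 0) fun n => y (n + 1), ih (v - y 0) fun n => y (n + 1)]

lemma monotone_integral_norm_radPartial (x : ℕ → X) :
    Monotone fun N => ∫ t in (0 : ℝ)..1, ‖radPartial x N t‖ := by
  refine monotone_nat_of_le_succ fun N => ?_
  simpa only [zero_add] using integral_norm_add_radPartial_le_succ N 0 x

end radPartial

namespace IsRadLimit

variable {X : Type*} [NormedAddCommGroup X] [NormedSpace ℝ X] {x : ℕ → X} {f : ℝ → X}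

lemma intervalIntegrable_norm (hf : IsRadLimit x f) :
    IntervalIntegrable (fun t => ‖f t‖) volume 0 1 := by
  simpa [radPartial_zero] using hf.1 0

lemma tendsto_integral_norm_radPartial (hf : IsRadLimit x f) :
    Tendsto (fun N => ∫ t in (0 : ℝ)..1, ‖radPartial x N t‖) atTop
      (𝓝 (∫ t in (0 : ℝ)..1, ‖f t‖)) := by
  rw [tendsto_iff_dist_tendsto_zero]
  refine squeeze_zero (fun _ => dist_nonneg) (fun N => ?_) hf.2
  have hN : IntervalIntegrable (fun t => ‖radPartial x N t‖) volume 0 1 := by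
    simpa using intervalIntegrable_norm_add_radPartial (0 : X) x N 0 1
  rw [Real.dist_eq, ← intervalIntegral.integral_sub hN hf.intervalIntegrable_norm]
  exact (intervalIntegral.abs_integral_le_integral_abs zero_le_one).trans <|
    intervalIntegral.integral_mono_on zero_le_one (hN.sub hf.intervalIntegrable_norm).abs (hf.1 N)
      fun t _ => abs_norm_sub_norm_le _ _

lemma integral_norm_radPartial_le (hf : IsRadLimit x f) (N : ℕ) :
    ∫ t in (0 : ℝ)..1, ‖radPartial x N t‖ ≤ ∫ t in (0 : ℝ)..1, ‖f t‖ :=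
  (monotone_integral_norm_radPartial x).ge_of_tendsto hf.tendsto_integral_norm_radPartial N

end IsRadLimit

lemma sum_range_mul_eq_mul_sum_add_sum {R : Type*} [CommRing R] (F a : ℕ → R) (N : ℕ) :
    ∑ n ∈ range N, F n * a n = F N * ∑ n ∈ range N, a n +
      ∑ i ∈ range N, (F i - F (i + 1)) * ∑ n ∈ range (i + 1), a n := by
  induction N with
  | zero => simp
  | succ N ih =>
    rw [sum_range_succ, ih, sum_range_succ (fun i => (F i - F (i + 1)) * ∑ n ∈ range (i + 1), a n),
      sum_range_succ a N]
    ring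

lemma rpow_neg_sub_rpow_neg_le {σ a b : ℝ} (hσ : 0 ≤ σ) (ha : 0 < a) (hab : a ≤ b) :
    a ^ (-σ) - b ^ (-σ) ≤ σ * a ^ (-σ - 1) * (b - a) := by
  rcases hab.eq_or_lt with rfl | hab
  · simp
  obtain ⟨ξ, hξ, hslope⟩ := exists_hasDerivAt_eq_slope (fun t => t ^ (-σ))
    (fun t => -σ * t ^ (-σ - 1)) hab
    (fun t ht =>
      (Real.continuousAt_rpow_const t _ (Or.inl (ha.trans_le ht.1).ne')).continuousWithinAt)
    (fun t ht => Real.hasDerivAt_rpow_const (Or.inl (ha.trans ht.1).ne'))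
  have hba : 0 < b - a := sub_pos.2 hab
  rw [eq_div_iff hba.ne'] at hslope
  have hξa : ξ ^ (-σ - 1) ≤ a ^ (-σ - 1) := Real.rpow_le_rpow_of_nonpos ha hξ.1.le (by linarith)
  nlinarith [mul_le_mul_of_nonneg_left hξa (mul_nonneg hσ hba.le)]

lemma sum_range_div_rpow_le {a : ℕ → ℝ} (ha : ∀ n, 0 ≤ a n) {M σ₀ σ : ℝ} (hσ₀ : 0 ≤ σ₀)
    (hσ : σ₀ < σ) (hA : ∀ N : ℕ, ∑ n ∈ range N, a n ≤ M * (N : ℝ) ^ σ₀) (N : ℕ) :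
    ∑ n ∈ range N, a n / ((n : ℝ) + 1) ^ σ ≤
      M * (1 + ∑' n : ℕ, σ / ((n : ℝ) + 1) ^ (σ - σ₀ + 1)) := by
  set F : ℕ → ℝ := fun n => ((n : ℝ) + 1) ^ (-σ)
  have hσ' : 0 ≤ σ := hσ₀.trans hσ.le
  have hM : 0 ≤ M := by simpa using le_trans (ha 0) (by simpa using hA 1)
  have hA' (n : ℕ) : ∑ i ∈ range n, a i ≤ M * ((n : ℝ) + 1) ^ σ₀ :=
    (hA n).trans (mul_le_mul_of_nonneg_left
      (Real.rpow_le_rpow n.cast_nonneg (by linarith) hσ₀) hM)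
  have hfirst : F N * ∑ n ∈ range N, a n ≤ M :=
    calc F N * ∑ n ∈ range N, a n ≤ F N * (M * ((N : ℝ) + 1) ^ σ₀) := by
          gcongr
          exact hA' N
      _ = M * ((N : ℝ) + 1) ^ (-σ + σ₀) := by
          rw [mul_left_comm, Real.rpow_add (by positivity)]
      _ ≤ M * 1 := by
          gcongr
          exact Real.rpow_le_one_of_one_le_of_nonpos (by simp) (by linarith)
      _ = M := mul_one M
  have hstep (i : ℕ) : (F i - F (i + 1)) * ∑ n ∈ range (i + 1), a n ≤
      M * (σ / ((i : ℝ) + 1) ^ (σ - σ₀ + 1)) := by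
    have hi : (0 : ℝ) < i + 1 := by positivity
    have hdiff : F i - F (i + 1) ≤ σ * ((i : ℝ) + 1) ^ (-σ - 1) := by
      simpa [F, add_assoc] using
        rpow_neg_sub_rpow_neg_le hσ' hi (le_add_of_nonneg_right zero_le_one)
    have hAi : ∑ n ∈ range (i + 1), a n ≤ M * ((i : ℝ) + 1) ^ σ₀ := by simpa using hA (i + 1)
    calc (F i - F (i + 1)) * ∑ n ∈ range (i + 1), a n
        ≤ σ * ((i : ℝ) + 1) ^ (-σ - 1) * (M * ((i : ℝ) + 1) ^ σ₀) :=
          mul_le_mul hdiff hAi (sum_nonneg fun n _ => ha n) (mul_nonneg hσ' (by positivity))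
      _ = M * (σ / ((i : ℝ) + 1) ^ (σ - σ₀ + 1)) := by
          rw [div_eq_mul_inv, ← Real.rpow_neg hi.le, show -(σ - σ₀ + 1) = -σ - 1 + σ₀ by ring,
            Real.rpow_add hi]
          ring
  have hsummable : Summable fun n : ℕ => σ / ((n : ℝ) + 1) ^ (σ - σ₀ + 1) := by
    have h := (Real.summable_one_div_nat_add_rpow 1 (σ - σ₀ + 1)).2 (by linarith)
    refine (h.mul_left σ).congr fun n => ?_
    rw [abs_of_nonneg (by positivity), mul_one_div]
  calc ∑ n ∈ range N, a n / ((n : ℝ) + 1) ^ σ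
      = F N * ∑ n ∈ range N, a n + ∑ i ∈ range N, (F i - F (i + 1)) * ∑ n ∈ range (i + 1), a n := by
        rw [← sum_range_mul_eq_mul_sum_add_sum]
        refine sum_congr rfl fun n _ => ?_
        dsimp only [F]
        rw [Real.rpow_neg (by positivity), div_eq_inv_mul]
    _ ≤ M + ∑ i ∈ range N, M * (σ / ((i : ℝ) + 1) ^ (σ - σ₀ + 1)) :=
        add_le_add hfirst (sum_le_sum fun i _ => hstep i)
    _ ≤ M * (1 + ∑' n : ℕ, σ / ((n : ℝ) + 1) ^ (σ - σ₀ + 1)) := by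
        rw [← mul_sum, mul_one_add]
        gcongr
        exact hsummable.sum_le_tsum _ fun i _ => div_nonneg hσ' (by positivity)

theorem abel_summation_rad_general {X : Type*} [NormedAddCommGroup X] [NormedSpace ℝ X]
    (x : ℕ → X) (f : ℝ → X) (hf : IsRadLimit x f)
    (σ₀ c : ℝ) (hσ₀ : 0 < σ₀) (hc : 0 < c)
    (hb : ∀ N : ℕ, ∑ n ∈ Finset.range N, ‖x n‖ ≤
      c * (N : ℝ) ^ σ₀ * ∫ t in (0:ℝ)..1, ‖radPartial x N t‖) :
    ∀ σ : ℝ, σ₀ < σ →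
      Summable (fun n : ℕ => ‖x n‖ / ((n : ℝ) + 1) ^ σ) ∧
      ∑' n : ℕ, ‖x n‖ / ((n : ℝ) + 1) ^ σ ≤
        c * (∫ t in (0:ℝ)..1, ‖f t‖) *
          (1 + ∑' n : ℕ, σ / ((n : ℝ) + 1) ^ (σ - σ₀ + 1)) := by
  intro σ hσ
  have hA (N : ℕ) : ∑ n ∈ range N, ‖x n‖ ≤ c * (∫ t in (0:ℝ)..1, ‖f t‖) * (N : ℝ) ^ σ₀ :=
    calc ∑ n ∈ range N, ‖x n‖ ≤ c * (N : ℝ) ^ σ₀ * ∫ t in (0:ℝ)..1, ‖radPartial x N t‖ := hb N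
      _ ≤ c * (N : ℝ) ^ σ₀ * ∫ t in (0:ℝ)..1, ‖f t‖ := by
          gcongr
          exact hf.integral_norm_radPartial_le N
      _ = c * (∫ t in (0:ℝ)..1, ‖f t‖) * (N : ℝ) ^ σ₀ := mul_right_comm _ _ _
  have hpartial := sum_range_div_rpow_le (fun n => norm_nonneg (x n)) hσ₀.le hσ hA
  have hnonneg (n : ℕ) : 0 ≤ ‖x n‖ / ((n : ℝ) + 1) ^ σ := by positivity
  exact ⟨summable_of_sum_range_le hnonneg hpartial, Real.tsum_le_of_sum_range_le hnonneg hpartial⟩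

/-- The Abel summation step: if `∑ rₙ xₙ` converges in `L¹([0,1];X)` to `f` and the partial
sums satisfy `∑_{n=1}^N ‖xₙ‖ ≤ c N^{σ₀} ∫₀¹ ‖∑_{n=1}^N rₙ(t) xₙ‖ dt` for every `N`, then for
every `σ > σ₀` the series `∑ ‖xₙ‖ / n^σ` converges with the stated bound, where
`K = ∫₀¹ ‖f(t)‖ dt`.  (Here the sequence is indexed so that `x n` is the coefficient of
the integer `n + 1`.) -/
theorem abel_summation_rad {X : Type*} [NormedAddCommGroup X] [NormedSpace ℝ X]
    [CompleteSpace X] (x : ℕ → X) (f : ℝ → X) (hf : IsRadLimit x f)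
    (σ₀ c : ℝ) (hσ₀ : 0 < σ₀) (hc : 0 < c)
    (hb : ∀ N : ℕ, ∑ n ∈ Finset.range N, ‖x n‖ ≤
      c * (N : ℝ) ^ σ₀ * ∫ t in (0:ℝ)..1, ‖radPartial x N t‖) :
    ∀ σ : ℝ, σ₀ < σ →
      Summable (fun n : ℕ => ‖x n‖ / ((n : ℝ) + 1) ^ σ) ∧
      ∑' n : ℕ, ‖x n‖ / ((n : ℝ) + 1) ^ σ ≤
        c * (∫ t in (0:ℝ)..1, ‖f t‖) *
          (1 + ∑' n : ℕ, σ / ((n : ℝ) + 1) ^ (σ - σ₀ + 1)) :=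
  abel_summation_rad_general x f hf σ₀ c hσ₀ hc hb
end

section
/- For σ < 1/(1+ε), there is a constant D > 0 (depending on σ, ε) such that ∑_{j=1}^N j^{-(1+ε)σ} ≥ D N^{1-(1+ε)σ} for all N ≥ 1. Combined with the lower bound on sums over prime powers, this shows: if K, m are such that ∑_{|α|=m, α supported on first N primes} p^{-ασ} ≤ K N^{(m+1)/2} for all N, then σ ≥ (m−1)/(2m). -/
/-!
Since `∑ 1 / p_n` diverges while `∑ n^{-(1+ε)}` converges, `p_{N-1} ≤ N^{1+ε}` for
infinitely many `N`. For such `N` each of the `≳ N^m` monotone multi-indices on the first `N`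
primes contributes at least `N^{-(1+ε)mσ}`, so the `m`-homogeneous sum is `≳ N^{m-(1+ε)mσ}`.
If `σ < (m-1)/(2m)` then, for `ε` small, this exponent exceeds `(m+1)/2`, contradicting the
bound `K N^{(m+1)/2}`.
-/

open Finset Filter
open scoped Classical

lemma rpow_one_sub_le_sum_range_rpow_neg {s : ℝ} (hs : 0 ≤ s) {N : ℕ} (hN : 0 < N) :
    (N : ℝ) ^ (1 - s) ≤ ∑ j ∈ range N, ((j : ℝ) + 1) ^ (-s) := by
  have hN' : (0 : ℝ) < N := by exact_mod_cast hN
  calc (N : ℝ) ^ (1 - s) = ∑ _j ∈ range N, (N : ℝ) ^ (-s) := by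
        rw [sum_const, card_range, nsmul_eq_mul, sub_eq_add_neg, Real.rpow_add hN',
          Real.rpow_one]
    _ ≤ ∑ j ∈ range N, ((j : ℝ) + 1) ^ (-s) := by
        refine sum_le_sum fun j hj => Real.rpow_le_rpow_of_nonpos (by positivity) ?_ (by linarith)
        exact_mod_cast mem_range.mp hj

lemma not_summable_inv_nth_prime : ¬ Summable fun n : ℕ => 1 / (Nat.nth Nat.Prime n : ℝ) := by
  have hrange : Set.range (Nat.nth Nat.Prime) = {p | p.Prime} :=
    Nat.range_nth_of_infinite Nat.infinite_setOfPred_prime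
  rw [show (fun n : ℕ => 1 / (Nat.nth Nat.Prime n : ℝ))
      = Set.indicator {p | p.Prime} (fun n : ℕ => 1 / (n : ℝ)) ∘ Nat.nth Nat.Prime by
    ext n; simp [Nat.prime_nth_prime n],
    (Nat.nth_injective Nat.infinite_setOfPred_prime).summable_iff
      (fun n hn => Set.indicator_of_notMem (hrange ▸ hn) _)]
  exact not_summable_one_div_on_primes

lemma frequently_nth_prime_le_rpow {ε : ℝ} (hε : 0 < ε) :
    ∃ᶠ n : ℕ in atTop, (Nat.nth Nat.Prime n : ℝ) ≤ ((n : ℝ) + 1) ^ (1 + ε) := by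
  by_contra! h
  have hsummable : Summable fun n : ℕ => 1 / ((n : ℝ) + 1) ^ (1 + ε) := by
    have := Real.summable_one_div_nat_rpow.mpr (by linarith : 1 < 1 + ε)
    simpa using (summable_nat_add_iff 1).mpr this
  refine not_summable_inv_nth_prime (hsummable.of_norm_bounded_eventually_nat ?_)
  filter_upwards [h] with n hn
  rw [Real.norm_of_nonneg (by positivity)]
  exact one_div_le_one_div_of_le (by positivity) hn.le

lemma frequently_forall_nth_prime_le_rpow {ε : ℝ} (hε : 0 < ε) :
    ∃ᶠ N : ℕ in atTop, ∀ k < N, (Nat.nth Nat.Prime k : ℝ) ≤ (N : ℝ) ^ (1 + ε) := by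
  refine (tendsto_add_atTop_nat 1).frequently ((frequently_nth_prime_le_rpow hε).mono ?_)
  intro n hn k hk
  have hmono : Nat.nth Nat.Prime k ≤ Nat.nth Nat.Prime n :=
    Nat.nth_monotone Nat.infinite_setOfPred_prime (Nat.lt_succ_iff.mp hk)
  push_cast
  exact (Nat.cast_le.mpr hmono).trans hn

lemma pow_div_le_card_monotone (m N : ℕ) :
    (N / m) ^ m ≤ #((univ : Finset (Fin m → Fin N)).filter Monotone) := by
  set q := N / m
  have hlt : ∀ (a : Fin m → Fin q) (i : Fin m), (i : ℕ) * q + a i < N := fun a i =>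
    calc (i : ℕ) * q + a i < (i + 1) * q := by
          rw [add_mul, one_mul]; exact Nat.add_lt_add_left (a i).2 _
      _ ≤ m * q := Nat.mul_le_mul_right q i.2
      _ ≤ N := mul_comm m q ▸ Nat.div_mul_le_self N m
  let block (a : Fin m → Fin q) : Fin m → Fin N := fun i => ⟨i * q + a i, hlt a i⟩
  have hblock_mono (a : Fin m → Fin q) : Monotone (block a) := by
    intro i j hij
    rcases hij.eq_or_lt with rfl | hij
    · exact le_rfl
    · show (i : ℕ) * q + a i ≤ j * q + a j
      have := Nat.mul_le_mul_right q (Nat.succ_le_of_lt hij)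
      have := (a i).2
      rw [Nat.succ_mul] at *
      omega
  calc (N / m) ^ m = #(univ : Finset (Fin m → Fin q)) := by simp [q]
    _ ≤ _ := by
      refine card_le_card_of_injOn block (fun a _ => by simpa using hblock_mono a) ?_
      intro a _ b _ hab
      funext i
      exact Fin.ext (by simpa [block] using congrFun hab i)

lemma div_pow_le_card_monotone {m N : ℕ} (hm : 0 < m) (hN : 2 * m ≤ N) :
    ((N : ℝ) / (2 * m)) ^ m ≤ #((univ : Finset (Fin m → Fin N)).filter Monotone) := by
  have hq : N ≤ 2 * m * (N / m) := by
    have := Nat.div_add_mod N m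
    have := Nat.mod_lt N hm
    have := Nat.le_mul_of_pos_right m (Nat.div_pos (by omega : m ≤ N) hm)
    rw [mul_assoc]
    omega
  calc ((N : ℝ) / (2 * m)) ^ m ≤ ((N / m : ℕ) : ℝ) ^ m := by
        gcongr
        rw [div_le_iff₀ (by positivity)]
        exact_mod_cast (mul_comm (2 * m) (N / m)) ▸ hq
    _ ≤ _ := by exact_mod_cast pow_div_le_card_monotone m N

/-- `∑_{|α| = m, α supported on the first N primes} (p^α)^{-σ}`: a multi-index `α` is encoded
by the monotone `f : Fin m → Fin N` listing the indices of the prime factors of `p^α` with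
multiplicity. -/
noncomputable def homogeneousPrimeSum (m N : ℕ) (σ : ℝ) : ℝ :=
  ∑ f ∈ (univ : Finset (Fin m → Fin N)).filter Monotone,
    (∏ i, (Nat.nth Nat.Prime (f i) : ℝ)) ^ (-σ)

lemma card_mul_rpow_le_homogeneousPrimeSum {m N : ℕ} {σ B : ℝ} (hσ : 0 ≤ σ)
    (hB : ∀ k < N, (Nat.nth Nat.Prime k : ℝ) ≤ B) :
    #((univ : Finset (Fin m → Fin N)).filter Monotone) * (B ^ m) ^ (-σ)
      ≤ homogeneousPrimeSum m N σ := by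
  rw [← nsmul_eq_mul]
  refine card_nsmul_le_sum _ _ _ fun f _ => ?_
  have hpos (i : Fin m) : (0 : ℝ) < Nat.nth Nat.Prime (f i) := by
    exact_mod_cast (Nat.prime_nth_prime _).pos
  refine Real.rpow_le_rpow_of_nonpos (prod_pos fun i _ => hpos i) ?_ (by linarith)
  calc ∏ i, (Nat.nth Nat.Prime (f i) : ℝ) ≤ ∏ _i : Fin m, B :=
        prod_le_prod (fun i _ => (hpos i).le) fun i _ => hB (f i) (f i).2
    _ = B ^ m := by simp

lemma frequently_rpow_le_homogeneousPrimeSum {m : ℕ} (hm : 0 < m) {σ ε : ℝ} (hσ : 0 ≤ σ)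
    (hε : 0 < ε) :
    ∃ᶠ N : ℕ in atTop, (2 * m : ℝ)⁻¹ ^ m * (N : ℝ) ^ (m - (1 + ε) * m * σ)
      ≤ homogeneousPrimeSum m N σ := by
  refine ((frequently_forall_nth_prime_le_rpow hε).and_eventually
    (eventually_ge_atTop (2 * m))).mono fun N ⟨hprimes, hN⟩ => ?_
  have hN0 : (0 : ℝ) < N := by exact_mod_cast (by omega : 0 < N)
  calc (2 * m : ℝ)⁻¹ ^ m * (N : ℝ) ^ (m - (1 + ε) * m * σ)
        = ((N : ℝ) / (2 * m)) ^ m * (((N : ℝ) ^ (1 + ε)) ^ m) ^ (-σ) := by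
        have hpow : (((N : ℝ) ^ (1 + ε)) ^ m) ^ (-σ) = (N : ℝ) ^ (-((1 + ε) * m * σ)) := by
          rw [← Real.rpow_natCast, ← Real.rpow_mul hN0.le, ← Real.rpow_mul hN0.le]
          ring_nf
        rw [hpow, sub_eq_add_neg, Real.rpow_add hN0, Real.rpow_natCast, div_eq_mul_inv, mul_pow]
        ring
    _ ≤ #((univ : Finset (Fin m → Fin N)).filter Monotone)
          * (((N : ℝ) ^ (1 + ε)) ^ m) ^ (-σ) := by
        gcongr
        exact div_pow_le_card_monotone hm hN
    _ ≤ homogeneousPrimeSum m N σ := card_mul_rpow_le_homogeneousPrimeSum hσ hprimes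

lemma not_frequently_mul_rpow_le_mul_rpow {a b c K : ℝ} (hc : 0 < c) (hab : b < a) :
    ¬ ∃ᶠ N : ℕ in atTop, c * (N : ℝ) ^ a ≤ K * (N : ℝ) ^ b := by
  rw [not_frequently]
  have hgrowth : Tendsto (fun N : ℕ => c * (N : ℝ) ^ (a - b)) atTop atTop :=
    ((tendsto_rpow_atTop (sub_pos.mpr hab)).comp tendsto_natCast_atTop_atTop).const_mul_atTop hc
  filter_upwards [hgrowth.eventually_gt_atTop K, eventually_gt_atTop 0] with N hK hN
  have hN' : (0 : ℝ) < N := by exact_mod_cast hN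
  rw [not_le, show a = (a - b) + b by ring, Real.rpow_add hN', ← mul_assoc]
  exact mul_lt_mul_of_pos_right hK (by positivity)

/-- For `σ < 1/(1+ε)` the partial sums of `∑ j^{-(1+ε)σ}` grow like `N^{1-(1+ε)σ}`;
combined with the lower bound for sums over `m`-homogeneous prime multi-indices, any
exponent `σ` with `∑_{|α|=m, α on the first N primes} p^{-ασ} ≤ K N^{(m+1)/2}` for all `N`
must satisfy `σ ≥ (m-1)/(2m)`. -/
theorem zeta_partial_sum_and_homogeneous_lower_bound :
    (∀ σ ε : ℝ, 0 < ε → 0 < σ → σ < 1 / (1 + ε) → ∃ D > (0:ℝ), ∀ N : ℕ, 1 ≤ N →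
      D * (N : ℝ) ^ (1 - (1 + ε) * σ) ≤
        ∑ j ∈ Finset.range N, ((j : ℝ) + 1) ^ (-(1 + ε) * σ)) ∧
    (∀ (m : ℕ) (σ K : ℝ), 1 ≤ m → 0 < σ → 0 < K →
      (∀ N : ℕ,
        (∑ f ∈ (Finset.univ : Finset (Fin m → Fin N)).filter Monotone,
          (∏ i, (Nat.nth Nat.Prime (f i) : ℝ)) ^ (-σ)) ≤ K * (N : ℝ) ^ (((m : ℝ) + 1) / 2)) →
      ((m : ℝ) - 1) / (2 * m) ≤ σ) := by
  refine ⟨fun σ ε hε hσ _ => ⟨1, one_pos, fun N hN => ?_⟩, fun m σ K hm hσ _ hbound => ?_⟩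
  · rw [one_mul, neg_mul]
    exact rpow_one_sub_le_sum_range_rpow_neg (by positivity) hN
  · by_contra! hσ_lt
    have hm' : (0 : ℝ) < m := by exact_mod_cast hm
    set δ := ((m : ℝ) - 1) / 2 - m * σ with hδ_def
    have hδ : 0 < δ := by
      rw [lt_div_iff₀ (by positivity)] at hσ_lt
      linarith
    set ε := δ / (2 * m * σ) with hε_def
    have hexponent : ((m : ℝ) + 1) / 2 < m - (1 + ε) * m * σ := by
      have hε_eq : ε * m * σ = δ / 2 := by rw [hε_def]; field_simp
      linarith [show (m : ℝ) - (1 + ε) * m * σ = m - m * σ - ε * m * σ by ring]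
    exact not_frequently_mul_rpow_le_mul_rpow (by positivity) hexponent
      ((frequently_rpow_le_homogeneousPrimeSum hm hσ.le (by positivity)).mono
        fun N hN => hN.trans (hbound N))
end
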